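/- arXiv:2405.10382 — 4 statements merged into one kernel-verified Lean document; each statement's English description precedes it below -/
import Mathlib

section
/- Let Z be a commutative Noetherian ring, let V be a Noetherian Z-module, and let m be a maximal ideal of Z. If for every nonzero submodule U ⊆ V the set of elements of U annihilated by m is nonzero, then V is annihilated by some power of m, i.e. mⁿV = 0 for some n. -/
/-- Lemma `FiniteGenInfChar`.
Let `Z` be a commutative Noetherian ring, `m ⊆ Z` a maximal ideal and `V` a Noetherian
`Z`-module.  If every nonzero submodule `U ⊆ V` contains a nonzero element annihilated
by `m`, then some power of `m` annihilates `V`. -/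
theorem pow_annihilates_of_every_submodule_has_m_invariant
    (Z : Type*) [CommRing Z] [IsNoetherianRing Z]
    (V : Type*) [AddCommGroup V] [Module Z V] [IsNoetherian Z V]
    (m : Ideal Z) (hm : m.IsMaximal)
    (h : ∀ U : Submodule Z V, U ≠ ⊥ → ∃ u ∈ U, u ≠ 0 ∧ ∀ z ∈ m, z • u = 0) :
    ∃ n : ℕ, ∀ z ∈ m ^ n, ∀ v : V, z • v = 0 := by
  classical
  -- the chain of `m^k`-torsion submodules
  set Wk : ℕ → Submodule Z V := fun k => Submodule.torsionBySet Z V ((m ^ k : Ideal Z) : Set Z)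
    with hWk
  have hWkmem : ∀ k (v : V), v ∈ Wk k ↔ ∀ z ∈ m ^ k, z • v = 0 := by
    intro k v
    rw [hWk]
    rw [Submodule.mem_torsionBySet_iff]
    constructor
    · intro H z hz; exact H ⟨z, hz⟩
    · intro H a; exact H a a.2
  have hWkmono : Monotone Wk := by
    intro k l hkl
    exact Submodule.torsionBySet_le_torsionBySet_of_subset
      (Ideal.pow_le_pow_right hkl)
  obtain ⟨N, hN0⟩ := (monotone_stabilizes_iff_noetherian.mpr inferInstance)
    ⟨Wk, hWkmono⟩
  have hN : ∀ k, N ≤ k → Wk N = Wk k := fun k hk => hN0 k hk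
  set W : Submodule Z V := Wk N with hW
  -- if `W = ⊤` we are done
  by_cases htop : W = ⊤
  · refine ⟨N, fun z hz v => ?_⟩
    have : v ∈ Wk N := by rw [← hW, htop]; trivial
    exact (hWkmem N v).mp this z hz
  -- otherwise, pick an associated prime of `V ⧸ W`
  exfalso
  haveI : Nontrivial (V ⧸ W) :=
    Submodule.Quotient.nontrivial_iff.mpr htop
  obtain ⟨p, hp, x, hx⟩ := (associatedPrimes.nonempty Z (V ⧸ W)).imp
    fun _ hp => isAssociatedPrime_iff.mp hp
  have hmemp : ∀ z : Z, z ∈ p ↔ z • x = 0 := by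
    intro z; rw [hx, Submodule.mem_colon_singleton, Submodule.mem_bot]
  have hxne : x ≠ 0 := by
    intro h0
    apply hp.ne_top
    ext z
    simp [hmemp, h0]
  obtain ⟨v, hv⟩ := Submodule.Quotient.mk_surjective W x
  have hsmul : ∀ z : Z, z ∈ p ↔ z • v ∈ W := by
    intro z
    rw [hmemp, ← hv, ← Submodule.Quotient.mk_smul,
      Submodule.Quotient.mk_eq_zero]
  by_cases hmp : m ≤ p
  · -- then `p = m` and `v` is `m^(N+1)`-torsion, so `x = 0`, contradiction
    have hvW : v ∈ Wk (N + 1) := by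
      rw [hWkmem]
      intro z hz
      rw [pow_succ] at hz
      refine Submodule.smul_induction_on hz ?_ ?_
      · intro r hr s hs
        have hsv : s • v ∈ W := (hsmul s).mp (hmp hs)
        have := (hWkmem N (s • v)).mp hsv r hr
        rw [smul_eq_mul, mul_smul]
        exact this
      · intro a b ha hb
        rw [add_smul, ha, hb, add_zero]
    have : v ∈ W := by rw [hN (N + 1) (Nat.le_succ N)]; exact hvW
    exact hxne (by rw [← hv, Submodule.Quotient.mk_eq_zero]; exact this)
  · -- pick `a ∈ m \ p` and apply `h` to `Z ∙ (a^N • v)`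
    obtain ⟨a, ham, hap⟩ := SetLike.not_le_iff_exists.mp hmp
    have haNp : a ^ N ∉ p := fun hc => hap (hp.mem_of_pow_mem N hc)
    have hvne : a ^ N • v ≠ 0 := by
      intro h0
      apply haNp
      rw [hsmul, h0]
      exact W.zero_mem
    obtain ⟨u, hu, hune, humkill⟩ := h (Z ∙ (a ^ N • v))
      (by
        intro hc
        exact hvne ((Submodule.span_singleton_eq_bot).mp hc))
    obtain ⟨c, hc⟩ := Submodule.mem_span_singleton.mp hu
    -- `u` is killed by `m`, hence lies in `W`
    have huW : u ∈ W := by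
      have h1 : u ∈ Wk 1 := by
        rw [hWkmem]
        intro z hz
        rw [pow_one] at hz
        exact humkill z hz
      rcases le_or_gt 1 N with hN1 | hN1
      · exact hWkmono hN1 h1
      · interval_cases N
        rw [hN 1 (Nat.zero_le 1)]; exact h1
    -- hence `c * a^N ∈ p`, so `c ∈ p`, so `c • v ∈ W`
    have hcaN : c * a ^ N ∈ p := by
      rw [hsmul, mul_smul]
      rw [← hc] at huW
      exact huW
    have hcp : c ∈ p := (hp.mem_or_mem hcaN).resolve_right haNp
    have hcvW : c • v ∈ W := (hsmul c).mp hcp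
    -- so `u = a^N • (c • v) = 0`, contradiction
    apply hune
    rw [← hc, smul_comm]
    have haN : a ^ N ∈ m ^ N := Ideal.pow_mem_pow ham N
    exact (hWkmem N (c • v)).mp hcvW (a ^ N) haN
end

section
/- Let Z be a commutative ring, P a prime ideal of Z, and V a Z-module of at most countable dimension over a field k ⊆ Z/P's base field such that V is torsion-free as a Z/P-module and Ann_Z(V) = P. Let X be the set of maximal ideals χ ⊇ P of Z with V/χV ≠ 0. Then the intersection over χ ∈ X of χV is zero; equivalently, the natural map V → ∏_{χ∈X} V/χV is injective. -/
/-!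
Put `A = Z ⧸ P`. Choose a maximal `A`-linearly independent subfamily `b` of a countable spanning
family of `V`: every member of the family has a nonzero multiple in the span `F` of `b`, and these
multipliers generate a countable multiplicative set `S` such that every vector has an `S`-multiple
in `F`. Write `s₀ • v = ∑ dᵢ bᵢ` with `d_j ≠ 0` and add `d_j` to `S`. If a prime `m` of `A` misses
`S` and `v ∈ m V`, then some `s ∈ S` has `s • v ∈ m F`, and comparing coordinates on `b` gives
`s * d_j ∈ m`, which is impossible. A maximal ideal missing `S` exists because `ℂ` is uncountable:
for a maximal ideal `M` of `S⁻¹A`, the field `S⁻¹A ⧸ M` has countable `ℂ`-dimension, so it is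
algebraic over `ℂ` and hence equal to `ℂ`. Then `A → S⁻¹A ⧸ M` is onto, and its kernel is the
maximal ideal we want.
-/

open Cardinal Submodule Set

universe u v

theorem Set.Countable.submonoid_closure {M : Type*} [Monoid M] {s : Set M} (hs : s.Countable) :
    (Submonoid.closure s : Set M).Countable := by
  have := hs.to_subtype
  rw [Submonoid.closure_eq_mrange, MonoidHom.coe_mrange]
  exact countable_range _

theorem Submonoid.zero_notMem_closure {M : Type*} [MonoidWithZero M] [NoZeroDivisors M]
    [Nontrivial M] {T : Set M} (hT : (0 : M) ∉ T) : (0 : M) ∉ Submonoid.closure T := fun h ↦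
  zero_notMem_nonZeroDivisors <| Submonoid.closure_le.2
    (fun _ ht ↦ mem_nonZeroDivisors_of_ne_zero (ne_of_mem_of_not_mem ht hT)) h

theorem Algebra.FiniteType.rank_le_aleph0 {k A : Type*} [Field k] [CommRing A] [Algebra k A]
    [Algebra.FiniteType k A] : Module.rank k A ≤ ℵ₀ := by
  obtain ⟨n, f, hf⟩ := Algebra.FiniteType.iff_quotient_mvPolynomial''.1 ‹_›
  have h := f.toLinearMap.lift_rank_le_of_surjective hf
  rw [MvPolynomial.rank_eq_lift, lift_lift] at h
  exact lift_le_aleph0.1 (h.trans (lift_le_aleph0.2 mk_le_aleph0))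

theorem Localization.rank_le_card_mul_rank {k A : Type*} [Field k] [CommRing A] [Algebra k A]
    (S : Submonoid A) :
    Module.rank k (Localization S) ≤ #S * Module.rank k A := by
  let φ : (S →₀ A) →ₗ[k] Localization S :=
    Finsupp.lsum k fun s ↦
      (LinearMap.mulRight k (IsLocalization.mk' (Localization S) (1 : A) s)).comp
        (IsScalarTower.toAlgHom k A (Localization S)).toLinearMap
  have hφ : Function.Surjective φ := by
    intro y
    obtain ⟨⟨a, s⟩, rfl⟩ := IsLocalization.mk'_surjective S y
    refine ⟨Finsupp.single s a, ?_⟩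
    simp only [φ, Finsupp.lsum_single, LinearMap.comp_apply, LinearMap.mulRight_apply,
      AlgHom.toLinearMap_apply, IsScalarTower.coe_toAlgHom']
    exact (IsLocalization.mk'_eq_mul_mk'_one a s).symm
  simpa [rank_finsupp'] using φ.rank_le_of_surjective hφ

theorem Algebra.IsAlgebraic.of_lift_rank_lt {k : Type u} {L : Type v} [Field k] [Field L]
    [Algebra k L] (h : lift.{u} (Module.rank k L) < lift.{v} #k) : Algebra.IsAlgebraic k L := by
  by_contra hL
  obtain ⟨x, hx⟩ := (Algebra.transcendental_iff_not_isAlgebraic.2 hL).1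
  exact h.not_ge hx.linearIndependent_sub_inv.cardinal_lift_le_rank

theorem Ideal.exists_isMaximal_disjoint_of_countable {k : Type u} {A : Type v} [Field k]
    [IsAlgClosed k] (hk : ℵ₀ < #k) [CommRing A] [Algebra k A] (hA : Module.rank k A ≤ ℵ₀)
    {S : Submonoid A} (hS : (S : Set A).Countable) (h0 : (0 : A) ∉ S) :
    ∃ m : Ideal A, m.IsMaximal ∧ Disjoint (S : Set A) m := by
  have : Nontrivial (Localization S) := OreLocalization.nontrivial_iff.2 h0
  obtain ⟨M, hM⟩ := Ideal.exists_maximal (Localization S)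
  let := Ideal.Quotient.field M
  have hrank : Module.rank k (Localization S ⧸ M) ≤ ℵ₀ := calc
    _ ≤ Module.rank k (Localization S) :=
      (Ideal.Quotient.mkₐ k M).toLinearMap.rank_le_of_surjective (Ideal.Quotient.mkₐ_surjective k M)
    _ ≤ #S * Module.rank k A := Localization.rank_le_card_mul_rank S
    _ ≤ ℵ₀ := (mul_le_mul' (mk_le_aleph0_iff.2 hS.to_subtype) hA).trans aleph0_mul_aleph0.le
  have : Algebra.IsAlgebraic k (Localization S ⧸ M) := .of_lift_rank_lt <|
    (lift_le_aleph0.2 hrank).trans_lt (aleph0_lt_lift.2 hk)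
  let φ : A →ₐ[k] Localization S ⧸ M :=
    (Ideal.Quotient.mkₐ k M).comp (IsScalarTower.toAlgHom k A _)
  have hφ : Function.Surjective φ := fun y ↦ by
    obtain ⟨c, rfl⟩ := (IsAlgClosed.algebraMap_bijective_of_isIntegral (k := k)).2 y
    exact ⟨algebraMap k A c, φ.commutes c⟩
  refine ⟨RingHom.ker φ, RingHom.ker_isMaximal_of_surjective φ hφ,
    Set.disjoint_left.2 fun s hs hsφ ↦ ?_⟩
  exact ((IsLocalization.map_units (Localization S) ⟨s, hs⟩).map (Ideal.Quotient.mk M)).ne_zero hsφ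

section Saturation

variable {A V : Type*} [CommRing A] [AddCommGroup V] [Module A V]

def Submodule.saturation (F : Submodule A V) (S : Submonoid A) : Submodule A V where
  carrier := {y | ∃ s ∈ S, s • y ∈ F}
  add_mem' := by
    rintro x y ⟨s, hs, hsx⟩ ⟨t, ht, hty⟩
    refine ⟨s * t, mul_mem hs ht, ?_⟩
    rw [smul_add, mul_comm, mul_smul, mul_comm, mul_smul]
    exact add_mem (F.smul_mem t hsx) (F.smul_mem s hty)
  zero_mem' := ⟨1, one_mem S, by simp⟩
  smul_mem' := by
    rintro a y ⟨s, hs, hsy⟩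
    exact ⟨s, hs, by rw [smul_comm]; exact F.smul_mem a hsy⟩

theorem Submodule.mem_saturation {F : Submodule A V} {S : Submonoid A} {y : V} :
    y ∈ F.saturation S ↔ ∃ s ∈ S, s • y ∈ F := Iff.rfl

theorem Submodule.smul_saturation_le (I : Ideal A) (F : Submodule A V) (S : Submonoid A) :
    I • F.saturation S ≤ (I • F).saturation S :=
  smul_le.2 fun a ha y ⟨s, hs, hsy⟩ ↦ ⟨s, hs, by rw [smul_comm]; exact smul_mem_smul ha hsy⟩

end Saturation

theorem LinearIndependent.coeff_mem_of_linearCombination_mem_ideal_smul {A V ι : Type*}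
    [CommRing A] [AddCommGroup V] [Module A V] {b : ι → V} (hb : LinearIndependent A b)
    {I : Ideal A} {d : ι →₀ A} (hd : Finsupp.linearCombination A b d ∈ I • span A (range b))
    (i : ι) : d i ∈ I := by
  obtain ⟨e, he, hed⟩ := (mem_ideal_smul_span_iff_exists_sum I b _).1 hd
  rw [← Finsupp.linearCombination_apply] at hed
  exact hb hed ▸ he i

section TorsionFree

variable {A V ι : Type*} [CommRing A] [IsDomain A] [AddCommGroup V] [Module A V] [Countable ι]
  {u : ι → V}

theorem exists_linearIndepOn_saturation_span_eq_top (hu : span A (range u) = ⊤) :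
    ∃ (J : Set ι) (S : Submonoid A), LinearIndepOn A u J ∧ (S : Set A).Countable ∧
      (0 : A) ∉ S ∧ (span A (u '' J)).saturation S = ⊤ := by
  obtain ⟨J, hJ, hmax⟩ := exists_maximal_linearIndepOn A u
  have : ∀ i, ∃ a : A, a ≠ 0 ∧ a • u i ∈ span A (u '' J) := fun i ↦ by
    by_cases hi : i ∈ J
    · exact ⟨1, one_ne_zero, by simpa using subset_span (mem_image_of_mem u hi)⟩
    · exact hmax i hi
  choose a ha0 ha using this
  refine ⟨J, Submonoid.closure (range a), hJ, (countable_range a).submonoid_closure,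
    Submonoid.zero_notMem_closure (by simpa [eq_comm] using ha0), ?_⟩
  rw [eq_top_iff, ← hu, span_le]
  rintro _ ⟨i, rfl⟩
  exact ⟨a i, Submonoid.subset_closure (mem_range_self i), ha i⟩

variable [Module.IsTorsionFree A V]

theorem exists_countable_submonoid_notMem_ideal_smul_top (hu : span A (range u) = ⊤) {v : V}
    (hv : v ≠ 0) : ∃ S : Submonoid A, (S : Set A).Countable ∧ (0 : A) ∉ S ∧
      ∀ m : Ideal A, m.IsPrime → Disjoint (S : Set A) m → v ∉ m • (⊤ : Submodule A V) := by
  obtain ⟨J, S₀, hJ, hS₀, hS₀0, hsat⟩ := exists_linearIndepOn_saturation_span_eq_top hu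
  set b : J → V := fun j ↦ u j
  have hF : span A (u '' J) = span A (range b) := by rw [image_eq_range]
  obtain ⟨s₀, hs₀, hs₀v⟩ := mem_saturation.1 (hsat ▸ mem_top : v ∈ _)
  obtain ⟨d, hd⟩ : s₀ • v ∈ LinearMap.range (Finsupp.linearCombination A b) := by
    rwa [Finsupp.range_linearCombination, ← hF]
  obtain ⟨j, hj⟩ : ∃ j, d j ≠ 0 := by
    by_contra! h
    rw [show d = 0 from Finsupp.ext h, map_zero, eq_comm, smul_eq_zero] at hd
    exact hd.elim (fun h ↦ hS₀0 (h ▸ hs₀)) hv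
  refine ⟨Submonoid.closure (insert (d j) S₀), (hS₀.insert _).submonoid_closure,
    Submonoid.zero_notMem_closure (by simp [hj.symm, hS₀0]), fun m hm hdisj hvm ↦ ?_⟩
  have hS : ∀ s ∈ insert (d j) (S₀ : Set A), s ∉ m := fun s hs ↦
    disjoint_left.1 hdisj (Submonoid.subset_closure hs)
  obtain ⟨s, hs, hsv⟩ := smul_saturation_le m _ S₀ (by rwa [hsat])
  have hcoeff : s * d j ∈ m := by
    refine hJ.coeff_mem_of_linearCombination_mem_ideal_smul (d := s • d) ?_ j
    rw [map_smul, hd, smul_comm, ← hF]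
    exact smul_mem _ s₀ hsv
  exact (hm.mem_or_mem hcoeff).elim (hS s (mem_insert_of_mem _ hs)) (hS _ (mem_insert _ _))

end TorsionFree

theorem Submodule.comap_smul_restrictScalars_le {R A V : Type*} [CommRing R] [CommRing A]
    [Algebra R A] [AddCommGroup V] [Module R V] [Module A V] [IsScalarTower R A V] (I : Ideal A)
    (N : Submodule A V) :
    I.comap (algebraMap R A) • N.restrictScalars R ≤ (I • N).restrictScalars R :=
  smul_le.2 fun r hr x hx ↦ by
    rw [Submodule.restrictScalars_mem, ← algebraMap_smul A r x]
    exact smul_mem_smul (Ideal.mem_comap.1 hr) hx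

theorem Module.IsTorsionBySet.isTorsionFree_quotient {R M : Type*} [CommRing R] [AddCommGroup M]
    [Module R M] {I : Ideal R} [I.IsPrime] (hM : IsTorsionBySet R M I)
    (htf : ∀ r ∉ I, ∀ x : M, x ≠ 0 → r • x ≠ 0) :
    letI := hM.module; Module.IsTorsionFree (R ⧸ I) M := by
  let := hM.module
  refine .of_smul_eq_zero fun a x hax ↦ ?_
  obtain ⟨r, rfl⟩ := Ideal.Quotient.mk_surjective a
  rw [Ideal.Quotient.eq_zero_iff_mem]
  by_contra! h
  exact htf r h.1 x h.2 (by rwa [← hM.mk_smul])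

theorem inter_maximal_smul_eq_bot_of_countable_torsionFree_general
    (Z : Type*) [CommRing Z] [Algebra ℂ Z] (hfg : Algebra.FiniteType ℂ Z)
    (P : Ideal Z) (hP : P.IsPrime)
    (V : Type*) [AddCommGroup V] [Module ℂ V] [Module Z V] [IsScalarTower ℂ Z V]
    (hcount : ∃ s : Set V, s.Countable ∧ Submodule.span ℂ s = ⊤)
    (hann : ∀ z ∈ P, ∀ v : V, z • v = 0)
    (htf : ∀ z : Z, z ∉ P → ∀ v : V, v ≠ 0 → z • v ≠ 0) :
    ∀ v : V,
      (∀ χ : Ideal Z, χ.IsMaximal → P ≤ χ →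
          χ • (⊤ : Submodule Z V) ≠ ⊤ → v ∈ χ • (⊤ : Submodule Z V)) →
      v = 0 := by
  intro v hv
  by_contra hv0
  have htors : Module.IsTorsionBySet Z V P := fun x z ↦ hann z z.2 x
  let := htors.module
  have : IsScalarTower ℂ (Z ⧸ P) V := htors.isScalarTower
  have : IsScalarTower Z (Z ⧸ P) V := htors.isScalarTower
  have := htors.isTorsionFree_quotient htf
  obtain ⟨s, hs, hspan⟩ := hcount
  have := hs.to_subtype
  have hspanA : span (Z ⧸ P) (range ((↑) : s → V)) = ⊤ := by
    refine eq_top_iff.2 fun x _ ↦ span_le_restrictScalars ℂ (Z ⧸ P) _ ?_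
    rw [Subtype.range_coe, hspan]
    exact mem_top
  obtain ⟨S, hSc, hS0, hSv⟩ := exists_countable_submonoid_notMem_ideal_smul_top hspanA hv0
  obtain ⟨m, hm, hmS⟩ := Ideal.exists_isMaximal_disjoint_of_countable
    (mk_complex ▸ aleph0_lt_continuum) Algebra.FiniteType.rank_le_aleph0 hSc hS0
  refine hSv m hm.isPrime hmS (comap_smul_restrictScalars_le (R := Z) m ⊤ ?_)
  let χ := m.comap (algebraMap Z (Z ⧸ P))
  have hχ : χ.IsMaximal := Ideal.comap_isMaximal_of_surjective _ Ideal.Quotient.mk_surjective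
  have hPχ : P ≤ χ := fun z hz ↦ by
    simp [χ, Ideal.Quotient.eq_zero_iff_mem.2 hz, m.zero_mem]
  by_cases htop : χ • (⊤ : Submodule Z V) = ⊤
  · exact htop ▸ mem_top
  · exact hv χ hχ hPχ htop

/-- Lemma `ExistenceQuotient`.
Let `Z` be a finitely generated commutative `ℂ`-algebra, `P ⊆ Z` a prime ideal and `V` a
nonzero `Z`-module of at most countable `ℂ`-dimension which is annihilated by `P` and
torsion-free over `Z/P` (so `Ann_Z(V) = P`).  Let `X` be the set of maximal ideals
`χ ⊇ P` with `V/χV ≠ 0`.  Then `⋂_{χ ∈ X} χV = 0`, i.e. the natural map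
`V → ∏_{χ ∈ X} V/χV` is injective. -/
theorem inter_maximal_smul_eq_bot_of_countable_torsionFree
    (Z : Type*) [CommRing Z] [Algebra ℂ Z] (hfg : Algebra.FiniteType ℂ Z)
    (P : Ideal Z) (hP : P.IsPrime)
    (V : Type*) [AddCommGroup V] [Module ℂ V] [Module Z V] [IsScalarTower ℂ Z V]
    [Nontrivial V]
    (hcount : ∃ s : Set V, s.Countable ∧ Submodule.span ℂ s = ⊤)
    (hann : ∀ z ∈ P, ∀ v : V, z • v = 0)
    (htf : ∀ z : Z, z ∉ P → ∀ v : V, v ≠ 0 → z • v ≠ 0) :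
    ∀ v : V,
      (∀ χ : Ideal Z, χ.IsMaximal → P ≤ χ →
          χ • (⊤ : Submodule Z V) ≠ ⊤ → v ∈ χ • (⊤ : Submodule Z V)) →
      v = 0 :=
  inter_maximal_smul_eq_bot_of_countable_torsionFree_general Z hfg P hP V hcount hann htf
end

section
/- Let W be a finite group acting linearly on a finite-dimensional complex vector space h, and let P be a prime ideal of the polynomial ring S(h) = ℂ[h*] whose zero set V(P) ⊆ h* is a coset λ₀ + a* of a linear subspace a* ⊆ h*. Let Q = ⋂_{w∈W} wP. Then with respect to the filtration by polynomial degree, the zero set of the graded ideal gr(Q) equals W·a*, and the zero set in h*//W of gr(P ∩ S(h)^W) equals q(a*), where q : h* → h*//W is the quotient map. -/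
/-!
Restricting a polynomial `p` to the line `t ↦ μ + t • x` gives a polynomial in `t` whose
coefficient of `t ^ deg p` is the leading form of `p` evaluated at `x`. If `p` vanishes on
`μ + b` for a subspace `b`, these restrictions vanish for `x ∈ b`, so the leading forms of
`Q = ⋂ w • P` vanish on `W • a*`. Conversely, for `x ∉ W • a*` choose a linear form `φ`
vanishing on `a*` with `φ (w⁻¹ • x) ≠ 0` for every `w` (ℂ is infinite). By the
Nullstellensatz `f = φ - φ λ₀` lies in `P`, so `∏ w, w • f` is a `W`-invariant element of `P`,
hence of `Q`, and its leading form `∏ w, w • φ` does not vanish at `x`.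
-/

open MvPolynomial

/-- The common zero locus in `h* = Fin n → ℂ` of a set of polynomials. -/
def polyZeroSet {n : ℕ} (S : Set (MvPolynomial (Fin n) ℂ)) : Set (Fin n → ℂ) :=
  {x | ∀ p ∈ S, MvPolynomial.eval x p = 0}

/-- The set of top-degree homogeneous parts (leading terms) of the nonzero elements of an
ideal `I`; it generates the associated graded ideal `gr I` for the degree filtration. -/
def leadingTerms {n : ℕ} (I : Ideal (MvPolynomial (Fin n) ℂ)) :
    Set (MvPolynomial (Fin n) ℂ) :=
  {q | ∃ p ∈ I, p ≠ 0 ∧ q = MvPolynomial.homogeneousComponent p.totalDegree p}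

theorem Polynomial.coeff_prod_sum_of_natDegree_le {R ι : Type*} [CommSemiring R]
    (s : Finset ι) (f : ι → Polynomial R) (e : ι → ℕ) (h : ∀ i ∈ s, (f i).natDegree ≤ e i) :
    (∏ i ∈ s, f i).coeff (∑ i ∈ s, e i) = ∏ i ∈ s, (f i).coeff (e i) := by
  classical
  induction s using Finset.induction_on with
  | empty => simp
  | insert a s ha ih =>
    have hs : ∀ i ∈ s, (f i).natDegree ≤ e i := fun i hi => h i (Finset.mem_insert_of_mem hi)
    rw [Finset.prod_insert ha, Finset.sum_insert ha, Finset.prod_insert ha,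
      Polynomial.coeff_mul_add_eq_of_natDegree_le (h a (Finset.mem_insert_self a s))
        ((Polynomial.natDegree_prod_le s f).trans (Finset.sum_le_sum hs)), ih hs]

namespace MvPolynomial

variable {R σ : Type*} [CommRing R]

noncomputable def lineRestriction (μ x : σ → R) : MvPolynomial σ R →ₐ[R] Polynomial R :=
  aeval fun i => Polynomial.C (x i) * Polynomial.X + Polynomial.C (μ i)

theorem eval_lineRestriction (μ x : σ → R) (p : MvPolynomial σ R) (t : R) :
    (lineRestriction μ x p).eval t = eval (μ + t • x) p := by
  rw [lineRestriction, aeval_def, ← Polynomial.coe_evalRingHom, eval₂_comp_left, eval]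
  congr 1
  · ext
    simp
  · funext i
    simp only [Function.comp_apply, Polynomial.coe_evalRingHom, Polynomial.eval_add,
      Polynomial.eval_mul, Polynomial.eval_C, Polynomial.eval_X, Pi.add_apply, Pi.smul_apply,
      smul_eq_mul]
    ring

theorem natDegree_lineRestriction_monomial_le (μ x : σ → R) (m : σ →₀ ℕ) (c : R) :
    (lineRestriction μ x (monomial m c)).natDegree ≤ m.degree := by
  rw [lineRestriction, aeval_monomial]
  refine (Polynomial.natDegree_C_mul_le _ _).trans <| (Polynomial.natDegree_prod_le _ _).trans <|
    Finset.sum_le_sum fun i _ =>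
      (Polynomial.natDegree_pow_le_of_le _ Polynomial.natDegree_linear_le).trans_eq (mul_one _)

theorem natDegree_lineRestriction_le (μ x : σ → R) (p : MvPolynomial σ R) :
    (lineRestriction μ x p).natDegree ≤ p.totalDegree := by
  conv_lhs => rw [p.as_sum, map_sum]
  exact Polynomial.natDegree_sum_le_of_forall_le _ _ fun m hm =>
    (natDegree_lineRestriction_monomial_le μ x m _).trans (le_totalDegree hm)

theorem coeff_lineRestriction_monomial_degree (μ x : σ → R) (m : σ →₀ ℕ) (c : R) :
    (lineRestriction μ x (monomial m c)).coeff m.degree = eval x (monomial m c) := by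
  rw [lineRestriction, aeval_monomial, eval_monomial, Polynomial.algebraMap_eq,
    Polynomial.coeff_C_mul, Finsupp.prod, Finsupp.prod, Finsupp.degree_apply,
    Polynomial.coeff_prod_sum_of_natDegree_le _ _ _ fun i _ =>
      (Polynomial.natDegree_pow_le_of_le _ Polynomial.natDegree_linear_le).trans_eq (mul_one _)]
  congr 1
  refine Finset.prod_congr rfl fun i _ => ?_
  simpa using Polynomial.coeff_pow_of_natDegree_le (m := m i)
    (Polynomial.natDegree_linear_le (a := x i) (b := μ i))

theorem coeff_lineRestriction (μ x : σ → R) {p : MvPolynomial σ R} {d : ℕ}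
    (hd : p.totalDegree ≤ d) :
    (lineRestriction μ x p).coeff d = eval x (homogeneousComponent d p) := by
  conv_lhs => rw [p.as_sum]
  conv_rhs => rw [p.as_sum]
  simp only [map_sum, Polynomial.finsetSum_coeff]
  refine Finset.sum_congr rfl fun m hm => ?_
  rw [homogeneousComponent_of_mem
    ((mem_homogeneousSubmodule _ _).mpr (isHomogeneous_monomial (coeff m p) rfl))]
  have hmd : m.degree ≤ d := (le_totalDegree hm).trans hd
  obtain hm' | hm' := hmd.eq_or_lt
  · rw [if_pos hm'.symm, ← hm', coeff_lineRestriction_monomial_degree]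
  · rw [if_neg hm'.ne', map_zero, Polynomial.coeff_eq_zero_of_natDegree_lt
      ((natDegree_lineRestriction_monomial_le μ x m _).trans_lt hm')]

theorem eval_homogeneousComponent_totalDegree_ne_zero_of_le_natDegree {μ x : σ → R}
    {p : MvPolynomial σ R} (hdeg : p.totalDegree ≤ (lineRestriction μ x p).natDegree)
    (hne : lineRestriction μ x p ≠ 0) :
    eval x (homogeneousComponent p.totalDegree p) ≠ 0 := by
  rw [← coeff_lineRestriction μ x le_rfl,
    le_antisymm hdeg (natDegree_lineRestriction_le μ x p)]
  exact Polynomial.leadingCoeff_ne_zero.mpr hne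

theorem eval_homogeneousComponent_totalDegree_eq_zero [IsDomain R] [Infinite R]
    {b : Submodule R (σ → R)} {μ x : σ → R} (hx : x ∈ b) {p : MvPolynomial σ R}
    (hp : ∀ v ∈ b, eval (μ + v) p = 0) :
    eval x (homogeneousComponent p.totalDegree p) = 0 := by
  have hline : lineRestriction μ x p = 0 := Polynomial.funext fun t => by
    simpa [eval_lineRestriction] using hp _ (b.smul_mem t hx)
  rw [← coeff_lineRestriction μ x le_rfl, hline, Polynomial.coeff_zero]

variable [Fintype σ] [DecidableEq σ]

noncomputable def affineForm (φ : (σ → R) →ₗ[R] R) (c : R) : MvPolynomial σ R :=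
  ∑ i, C (φ (Pi.single i 1)) * X i + C c

theorem eval_affineForm (φ : (σ → R) →ₗ[R] R) (c : R) (y : σ → R) :
    eval y (affineForm φ c) = φ y + c := by
  conv_rhs => rw [pi_eq_sum_univ' y]
  simp [affineForm, mul_comm]

theorem totalDegree_affineForm_le (φ : (σ → R) →ₗ[R] R) (c : R) :
    (affineForm φ c).totalDegree ≤ 1 := by
  refine (totalDegree_add _ _).trans (max_le ?_ (by simp))
  exact (IsHomogeneous.sum _ _ _ fun i _ => isHomogeneous_C_mul_X _ i).totalDegree_le

variable [IsDomain R] [Infinite R]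

theorem lineRestriction_affineForm (μ x : σ → R) (φ : (σ → R) →ₗ[R] R) (c : R) :
    lineRestriction μ x (affineForm φ c) =
      Polynomial.C (φ x) * Polynomial.X + Polynomial.C (φ μ + c) :=
  Polynomial.funext fun t => by
    simp only [eval_lineRestriction, eval_affineForm, map_add, map_smul, smul_eq_mul,
      Polynomial.eval_add, Polynomial.eval_mul, Polynomial.eval_C, Polynomial.eval_X]
    ring

theorem eval_homogeneousComponent_totalDegree_prod_affineForm_ne_zero {ι : Type*}
    (s : Finset ι) (φ : ι → (σ → R) →ₗ[R] R) (c : ι → R) {x : σ → R}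
    (hx : ∀ i ∈ s, φ i x ≠ 0) :
    eval x (homogeneousComponent (∏ i ∈ s, affineForm (φ i) (c i)).totalDegree
      (∏ i ∈ s, affineForm (φ i) (c i))) ≠ 0 := by
  have hline : lineRestriction 0 x (∏ i ∈ s, affineForm (φ i) (c i)) =
      ∏ i ∈ s, (Polynomial.C (φ i x) * Polynomial.X + Polynomial.C (c i)) := by
    simp [lineRestriction_affineForm]
  have hfactor : ∀ i ∈ s, Polynomial.C (φ i x) * Polynomial.X + Polynomial.C (c i) ≠ 0 :=
    fun i hi => Polynomial.ne_zero_of_natDegree_gt (Polynomial.natDegree_linear (hx i hi)).symm.le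
  refine eval_homogeneousComponent_totalDegree_ne_zero_of_le_natDegree (μ := 0) ?_ ?_
  · rw [hline, Polynomial.natDegree_prod _ _ hfactor,
      Finset.sum_congr rfl fun i hi => Polynomial.natDegree_linear (hx i hi)]
    exact (totalDegree_finsetProd _ _).trans
      (Finset.sum_le_sum fun i _ => totalDegree_affineForm_le _ _)
  · rw [hline]
    exact Finset.prod_ne_zero_iff.mpr hfactor

end MvPolynomial

theorem Submodule.exists_dual_forall_mem_eq_zero_forall_apply_ne_zero {K V ι : Type*} [Field K]
    [Infinite K] [AddCommGroup V] [Module K V] [Finite ι] (b : Submodule K V) (y : ι → V)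
    (hy : ∀ i, y i ∉ b) :
    ∃ φ : Module.Dual K V, (∀ v ∈ b, φ v = 0) ∧ ∀ i, φ (y i) ≠ 0 := by
  obtain ⟨ψ, hψ⟩ := Module.exists_dual_forall_apply_ne_zero (K := K) (fun i => b.mkQ (y i))
    fun i => by simpa using hy i
  exact ⟨ψ ∘ₗ b.mkQ, fun v hv => by simp [(Submodule.Quotient.mk_eq_zero b).mpr hv], hψ⟩

theorem apply_prod_orbit {R A W : Type*} [CommSemiring R] [CommSemiring A] [Algebra R A]
    [Group W] [Fintype W] (σ : W →* (A ≃ₐ[R] A)) (f : A) (w₀ : W) :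
    σ w₀ (∏ w, σ w f) = ∏ w, σ w f := by
  rw [map_prod]
  exact Fintype.prod_equiv (Equiv.mulLeft w₀) _ _ fun w => by simp [map_mul]

theorem mem_of_forall_mem_polyZeroSet_eval_eq_zero {n : ℕ} {P : Ideal (MvPolynomial (Fin n) ℂ)}
    (hP : P.IsPrime) {f : MvPolynomial (Fin n) ℂ}
    (hf : ∀ z ∈ polyZeroSet (P : Set (MvPolynomial (Fin n) ℂ)), eval z f = 0) : f ∈ P := by
  rw [← IsPrime.vanishingIdeal_zeroLocus (K := ℂ) (h := hP), mem_vanishingIdeal_iff]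
  exact hf

section GroupAction

variable {n : ℕ} {W : Type*} [Group W]
  {σ : W →* (MvPolynomial (Fin n) ℂ ≃ₐ[ℂ] MvPolynomial (Fin n) ℂ)}
  {ρ : W →* ((Fin n → ℂ) ≃ₗ[ℂ] (Fin n → ℂ))}

theorem apply_affineForm
    (hcompat : ∀ (w : W) (p : MvPolynomial (Fin n) ℂ) (x : Fin n → ℂ),
      eval x (σ w p) = eval (ρ w⁻¹ x) p)
    (w : W) (φ : (Fin n → ℂ) →ₗ[ℂ] ℂ) (c : ℂ) :
    σ w (affineForm φ c) = affineForm (φ ∘ₗ (ρ w⁻¹).toLinearMap) c :=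
  MvPolynomial.funext fun x => by simp [hcompat, eval_affineForm]

theorem iUnion_image_subset_polyZeroSet_leadingTerms
    (hcompat : ∀ (w : W) (p : MvPolynomial (Fin n) ℂ) (x : Fin n → ℂ),
      eval x (σ w p) = eval (ρ w⁻¹ x) p)
    {P : Ideal (MvPolynomial (Fin n) ℂ)} {a : Submodule ℂ (Fin n → ℂ)} {l₀ : Fin n → ℂ}
    (hVP : (fun v => l₀ + v) '' (a : Set (Fin n → ℂ)) ⊆
      polyZeroSet (P : Set (MvPolynomial (Fin n) ℂ))) :
    ⋃ w : W, (ρ w) '' (a : Set (Fin n → ℂ)) ⊆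
      polyZeroSet (leadingTerms (⨅ w : W, Ideal.map ((σ w).toAlgHom.toRingHom) P)) := by
  rintro x hx _ ⟨p, hpQ, -, rfl⟩
  obtain ⟨w, u, hu, rfl⟩ := Set.mem_iUnion.mp hx
  obtain ⟨q, hqP, rfl⟩ := (Ideal.mem_map_iff_of_surjective _ (σ w).surjective).mp
    (Ideal.mem_iInf.mp hpQ w)
  refine eval_homogeneousComponent_totalDegree_eq_zero (b := a.map (ρ w).toLinearMap)
    (μ := ρ w l₀) ⟨u, hu, rfl⟩ ?_
  rintro _ ⟨v, hv, rfl⟩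
  simpa [hcompat] using hVP ⟨v, hv, rfl⟩ q hqP

theorem polyZeroSet_leadingTerms_subset (P : Ideal (MvPolynomial (Fin n) ℂ)) :
    polyZeroSet (leadingTerms (⨅ w : W, Ideal.map ((σ w).toAlgHom.toRingHom) P)) ⊆
      {x | ∀ p ∈ P, (∀ w : W, σ w p = p) →
        eval x (homogeneousComponent p.totalDegree p) = 0} := by
  intro x hx p hp hinv
  obtain rfl | hp0 := eq_or_ne p 0
  · simp
  refine hx _ ⟨p, Ideal.mem_iInf.mpr fun w => ?_, hp0, rfl⟩
  rw [← hinv w]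
  exact Ideal.mem_map_of_mem _ hp

variable [Fintype W]

theorem setOf_invariant_leadingForm_eq_zero_subset_iUnion_image
    (hcompat : ∀ (w : W) (p : MvPolynomial (Fin n) ℂ) (x : Fin n → ℂ),
      eval x (σ w p) = eval (ρ w⁻¹ x) p)
    {P : Ideal (MvPolynomial (Fin n) ℂ)} (hP : P.IsPrime) {a : Submodule ℂ (Fin n → ℂ)}
    {l₀ : Fin n → ℂ} (hVP : polyZeroSet (P : Set (MvPolynomial (Fin n) ℂ)) ⊆
      (fun v => l₀ + v) '' (a : Set (Fin n → ℂ))) :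
    {x | ∀ p ∈ P, (∀ w : W, σ w p = p) → eval x (homogeneousComponent p.totalDegree p) = 0} ⊆
      ⋃ w : W, (ρ w) '' (a : Set (Fin n → ℂ)) := by
  intro x hx
  by_contra hxU
  have hxa (w : W) : ρ w⁻¹ x ∉ a := fun hw =>
    hxU (Set.mem_iUnion.mpr ⟨w, _, hw, by simp [map_inv]⟩)
  obtain ⟨φ, hφa, hφx⟩ := a.exists_dual_forall_mem_eq_zero_forall_apply_ne_zero _ hxa
  set f := affineForm φ (-φ l₀)
  have hfP : f ∈ P := mem_of_forall_mem_polyZeroSet_eval_eq_zero hP fun z hz => by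
    obtain ⟨v, hv, rfl⟩ := hVP hz
    simp [f, eval_affineForm, hφa v hv]
  have hprodP : ∏ w, σ w f ∈ P := P.prod_mem (Finset.mem_univ 1) (by simpa using hfP)
  refine absurd (hx _ hprodP (apply_prod_orbit σ f)) ?_
  simp only [f, apply_affineForm hcompat]
  exact eval_homogeneousComponent_totalDegree_prod_affineForm_ne_zero _ _ _ fun w _ => hφx w

end GroupAction

theorem grAffine_general
    {n : ℕ} (W : Type*) [Group W] [Fintype W]
    (σ : W →* (MvPolynomial (Fin n) ℂ ≃ₐ[ℂ] MvPolynomial (Fin n) ℂ))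
    (ρ : W →* ((Fin n → ℂ) ≃ₗ[ℂ] (Fin n → ℂ)))
    (hcompat : ∀ (w : W) (p : MvPolynomial (Fin n) ℂ) (x : Fin n → ℂ),
      MvPolynomial.eval x (σ w p) = MvPolynomial.eval (ρ w⁻¹ x) p)
    (P : Ideal (MvPolynomial (Fin n) ℂ)) (hP : P.IsPrime)
    (a : Submodule ℂ (Fin n → ℂ)) (l₀ : Fin n → ℂ)
    (hVP : polyZeroSet (P : Set (MvPolynomial (Fin n) ℂ)) =
      (fun v => l₀ + v) '' (a : Set (Fin n → ℂ))) :
    (polyZeroSet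
        (leadingTerms (⨅ w : W, Ideal.map ((σ w).toAlgHom.toRingHom) P)) =
      ⋃ w : W, (ρ w) '' (a : Set (Fin n → ℂ))) ∧
    ({x : Fin n → ℂ | ∀ p ∈ P, (∀ w : W, σ w p = p) →
        MvPolynomial.eval x (MvPolynomial.homogeneousComponent p.totalDegree p) = 0} =
      ⋃ w : W, (ρ w) '' (a : Set (Fin n → ℂ))) := by
  have hUZ := iUnion_image_subset_polyZeroSet_leadingTerms hcompat hVP.ge
  have hZZ := polyZeroSet_leadingTerms_subset (σ := σ) P
  have hZU := setOf_invariant_leadingForm_eq_zero_subset_iUnion_image hcompat hP hVP.le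
  exact ⟨(hZZ.trans hZU).antisymm hUZ, hZU.antisymm (hUZ.trans hZZ)⟩

/-- Lemma `GrAffine`.
Let `W` be a finite group acting linearly on `h* = ℂⁿ` (action `ρ` on points, induced
action `σ` on the polynomial ring `S(h) = ℂ[h*]`, compatibly: `(σ w p)(x) = p(ρ w⁻¹ x)`).
Let `P` be a prime ideal whose zero set is a coset `λ₀ + a*` of a linear subspace
`a* ⊆ h*`, and let `Q = ⋂_w wP`.  Then, for the degree filtration, the zero set of
`gr Q` equals `W·a*`, and the zero set (pulled back to `h*`, i.e. the preimage of
`q(a*)` under `q : h* → h*//W`) of `gr(P ∩ S(h)^W)` equals `W·a*` as well. -/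
theorem grAffine
    {n : ℕ} (W : Type*) [Group W] [Fintype W]
    (σ : W →* (MvPolynomial (Fin n) ℂ ≃ₐ[ℂ] MvPolynomial (Fin n) ℂ))
    (ρ : W →* ((Fin n → ℂ) ≃ₗ[ℂ] (Fin n → ℂ)))
    (hcompat : ∀ (w : W) (p : MvPolynomial (Fin n) ℂ) (x : Fin n → ℂ),
      MvPolynomial.eval x (σ w p) = MvPolynomial.eval (ρ w⁻¹ x) p)
    (hlin : ∀ (w : W) (p : MvPolynomial (Fin n) ℂ),
      p.IsHomogeneous 1 → (σ w p).IsHomogeneous 1)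
    (P : Ideal (MvPolynomial (Fin n) ℂ)) (hP : P.IsPrime)
    (a : Submodule ℂ (Fin n → ℂ)) (l₀ : Fin n → ℂ)
    (hVP : polyZeroSet (P : Set (MvPolynomial (Fin n) ℂ)) =
      (fun v => l₀ + v) '' (a : Set (Fin n → ℂ))) :
    (polyZeroSet
        (leadingTerms (⨅ w : W, Ideal.map ((σ w).toAlgHom.toRingHom) P)) =
      ⋃ w : W, (ρ w) '' (a : Set (Fin n → ℂ))) ∧
    ({x : Fin n → ℂ | ∀ p ∈ P, (∀ w : W, σ w p = p) →
        MvPolynomial.eval x (MvPolynomial.homogeneousComponent p.totalDegree p) = 0} =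
      ⋃ w : W, (ρ w) '' (a : Set (Fin n → ℂ))) :=
  grAffine_general W σ ρ hcompat P hP a l₀ hVP
end

section
/- Let g_ℝ be a real Lie algebra with complexification g, and let * : U(g) → U(g) be the anti-linear anti-involution extending X ↦ -conj(X) on g (where conj is complex conjugation with respect to g_ℝ). Let V be a g-module endowed with a g_ℝ-invariant Hermitian inner product ⟨·,·⟩ (i.e. ⟨Xv,w⟩ + ⟨v,Xw⟩ = 0 for X ∈ g_ℝ). Then for every nonzero v ∈ V, the annihilator ideal Ann_{Z(g)}(v) in the center Z(g) of U(g) is a *-stable radical ideal, and the same holds for Ann_{Z(g)}(V). -/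
/-!
If `star a` is adjoint to `a` for a definite form `B`, then
`B (a • w) (a • w) = B w ((star a * a) • w)`, so `(star a * a) • w = 0` forces `a • w = 0`.
Applied to `star z` for a central `z` (where `z * star z = star z * z`) this gives `*`-stability
of the annihilator; applied repeatedly to powers of the self-adjoint element `star z * z`, whose
`n`-th power is `star z ^ n * z ^ n`, it gives radicality. Adjointness of `star` on all of `U(g)`
reduces to the generators `ι X`, because the adjoint elements form a subalgebra, and then to
`X ∈ g_ℝ`, where it is the invariance of `B`, because every `X` is a complex combination of
elements fixed by the conjugation.
-/

open UniversalEnvelopingAlgebra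

structure IsDefiniteAdjointForm (A : Type*) {V K : Type*} [Star A] [SMul A V] [Zero V] [Zero K]
    (B : V → V → K) : Prop where
  adjoint : ∀ (a : A) (v w : V), B (a • v) w = B v (star a • w)
  apply_zero : ∀ v, B v 0 = 0
  eq_zero_of_apply_self : ∀ v, B v v = 0 → v = 0

namespace IsDefiniteAdjointForm

variable {A V K : Type*} [Monoid A] [StarMul A] [AddMonoid V] [DistribMulAction A V] [Zero K]
  {B : V → V → K}

theorem smul_eq_zero_of_star_mul_smul_eq_zero (hB : IsDefiniteAdjointForm A B) {a : A} {w : V}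
    (h : (star a * a) • w = 0) : a • w = 0 :=
  hB.eq_zero_of_apply_self _ (by rw [hB.adjoint, ← mul_smul, h, hB.apply_zero])

theorem star_smul_eq_zero_of_smul_eq_zero (hB : IsDefiniteAdjointForm A B) {a : A} {w : V}
    [IsStarNormal a] (h : a • w = 0) : star a • w = 0 :=
  hB.smul_eq_zero_of_star_mul_smul_eq_zero <| by
    rw [star_star, ← star_comm_self', mul_smul, h, smul_zero]

theorem smul_eq_zero_of_pow_two_pow_smul_eq_zero (hB : IsDefiniteAdjointForm A B) {a : A}
    (ha : IsSelfAdjoint a) {w : V} (k : ℕ) (h : a ^ 2 ^ k • w = 0) : a • w = 0 := by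
  induction k with
  | zero => simpa using h
  | succ k ih =>
    refine ih (hB.smul_eq_zero_of_star_mul_smul_eq_zero ?_)
    rwa [(ha.pow _).star_eq, ← pow_add, ← two_mul, ← pow_succ']

theorem smul_eq_zero_of_pow_smul_eq_zero (hB : IsDefiniteAdjointForm A B) {a : A}
    [IsStarNormal a] {w : V} (n : ℕ) (h : a ^ n • w = 0) : a • w = 0 := by
  have hn : (star a * a) ^ 2 ^ n • w = 0 := by
    rw [← Nat.sub_add_cancel n.lt_two_pow_self.le, pow_add, mul_smul,
      star_comm_self.mul_pow n, mul_smul, h, smul_zero, smul_zero]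
  exact hB.smul_eq_zero_of_star_mul_smul_eq_zero
    (hB.smul_eq_zero_of_pow_two_pow_smul_eq_zero (IsSelfAdjoint.star_mul_self a) n hn)

end IsDefiniteAdjointForm

section adjointSubalgebra

variable {R A V : Type*} [CommSemiring R] [StarRing R] [Semiring A] [StarRing A] [Algebra R A]
  [StarModule R A] [AddCommMonoid V] [Module R V] [Module A V] [IsScalarTower R A V]

def adjointSubalgebra (B : V →ₗ[R] V →ₗ⋆[R] R) : Subalgebra R A where
  carrier := {a | ∀ v w, B (a • v) w = B v (star a • w)}
  mul_mem' {a b} ha hb v w := by rw [mul_smul, ha, hb, star_mul, mul_smul]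
  add_mem' {a b} ha hb v w := by
    rw [add_smul, map_add, LinearMap.add_apply, ha, hb, star_add, add_smul, map_add]
  algebraMap_mem' c v w := by
    rw [algebraMap_smul, ← algebraMap_star_comm, algebraMap_smul, map_smul, map_smulₛₗ,
      starRingEnd_apply, star_star, LinearMap.smul_apply]

theorem mem_adjointSubalgebra {B : V →ₗ[R] V →ₗ⋆[R] R} {a : A} :
    a ∈ adjointSubalgebra B ↔ ∀ v w, B (a • v) w = B v (star a • w) :=
  Iff.rfl

end adjointSubalgebra

theorem UniversalEnvelopingAlgebra.adjoin_range_ι (R L : Type*) [CommRing R] [LieRing L]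
    [LieAlgebra R L] :
    Algebra.adjoin R (Set.range (ι R : L → UniversalEnvelopingAlgebra R L)) = ⊤ := by
  have hsurj : Function.Surjective (mkAlgHom R L) := RingCon.mkₐ_surjective (ringCon R L)
  rw [← (AlgHom.range_eq_top _).2 hsurj, ← Algebra.map_top, ← TensorAlgebra.adjoin_range_ι,
    AlgHom.map_adjoin, ← Set.range_comp]
  rfl

theorem Submodule.eq_top_of_forall_conj_eq_self_mem {L : Type*} [AddCommGroup L] [Module ℂ L]
    (c : L →ₗ⋆[ℂ] L) (hc : ∀ X, c (c X) = X) (p : Submodule ℂ L)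
    (hp : ∀ X, c X = X → X ∈ p) : p = ⊤ := by
  refine eq_top_iff'.2 fun X => ?_
  have hX : X = (1 / 2 : ℂ) • (X + c X) + (Complex.I / 2) • (Complex.I • (c X - X)) := by
    match_scalars
    · linear_combination (1 / 2 : ℂ) * Complex.I_sq
    · linear_combination (-1 / 2 : ℂ) * Complex.I_sq
  rw [hX]
  refine add_mem (smul_mem _ _ (hp _ ?_)) (smul_mem _ _ (hp _ ?_))
  · rw [map_add, hc, add_comm]
  · rw [map_smulₛₗ, map_sub, hc, Complex.conj_I, neg_smul, ← smul_neg, neg_sub]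

section

-- `ι` is a Lie morphism for the commutator bracket of `U(g)`.
attribute [local instance] LieRing.ofAssociativeRing

theorem UniversalEnvelopingAlgebra.adjointSubalgebra_eq_top {L V : Type*} [LieRing L]
    [LieAlgebra ℂ L] [StarRing (UniversalEnvelopingAlgebra ℂ L)]
    [StarModule ℂ (UniversalEnvelopingAlgebra ℂ L)] [AddCommGroup V] [Module ℂ V]
    [Module (UniversalEnvelopingAlgebra ℂ L) V]
    [IsScalarTower ℂ (UniversalEnvelopingAlgebra ℂ L) V]
    (c : L →ₗ⋆[ℂ] L) (hc : ∀ X, c (c X) = X) (hstar : ∀ X, star (ι ℂ X) = -ι ℂ (c X))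
    (B : V →ₗ[ℂ] V →ₗ⋆[ℂ] ℂ)
    (hB : ∀ X, c X = X → ∀ v w, B (ι ℂ X • v) w + B v (ι ℂ X • w) = 0) :
    adjointSubalgebra (A := UniversalEnvelopingAlgebra ℂ L) B = ⊤ := by
  have hreal : (Subalgebra.toSubmodule (adjointSubalgebra B)).comap (ι ℂ (L := L)).toLinearMap
      = ⊤ := by
    refine Submodule.eq_top_of_forall_conj_eq_self_mem c hc _ fun X hX v w => ?_
    rw [LieHom.coe_toLinearMap, hstar, hX, neg_smul, map_neg, eq_neg_iff_add_eq_zero]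
    exact hB X hX v w
  rw [eq_top_iff, ← adjoin_range_ι, Algebra.adjoin_le_iff]
  rintro _ ⟨X, rfl⟩
  exact (Submodule.eq_top_iff'.1 hreal X : _)

end

theorem center_annihilator_star_stable_radical_general
    (L : Type*) [LieRing L] [LieAlgebra ℂ L]
    (conjL : L → L)
    (hconj_add : ∀ X Y : L, conjL (X + Y) = conjL X + conjL Y)
    (hconj_smul : ∀ (c : ℂ) (X : L), conjL (c • X) = (starRingEnd ℂ) c • conjL X)
    (hconj_invol : ∀ X : L, conjL (conjL X) = X)
    (st : UniversalEnvelopingAlgebra ℂ L → UniversalEnvelopingAlgebra ℂ L)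
    (hst_add : ∀ a b, st (a + b) = st a + st b)
    (hst_mul : ∀ a b, st (a * b) = st b * st a)
    (hst_smul : ∀ (c : ℂ) a, st (c • a) = (starRingEnd ℂ) c • st a)
    (hst_invol : ∀ a, st (st a) = a)
    (hst_ι : ∀ X : L, st (ι ℂ X) = - ι ℂ (conjL X))
    (V : Type*) [AddCommGroup V] [Module ℂ V]
    [Module (UniversalEnvelopingAlgebra ℂ L) V]
    [IsScalarTower ℂ (UniversalEnvelopingAlgebra ℂ L) V]
    (B : V → V → ℂ)
    (hB_addl : ∀ u v w, B (u + v) w = B u w + B v w)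
    (hB_smull : ∀ (c : ℂ) v w, B (c • v) w = c * B v w)
    (hB_herm : ∀ v w, B v w = (starRingEnd ℂ) (B w v))
    (hB_posdef : ∀ v : V, v ≠ 0 → 0 < (B v v).re ∧ (B v v).im = 0)
    (hB_inv : ∀ X : L, conjL X = X → ∀ v w : V,
      B ((ι ℂ X : UniversalEnvelopingAlgebra ℂ L) • v) w
        + B v ((ι ℂ X : UniversalEnvelopingAlgebra ℂ L) • w) = 0) :
    (∀ v : V, v ≠ 0 →
      (∀ z : UniversalEnvelopingAlgebra ℂ L,
        (∀ u, u * z = z * u) → z • v = 0 → st z • v = 0) ∧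
      (∀ z : UniversalEnvelopingAlgebra ℂ L, (∀ u, u * z = z * u) →
        ∀ n : ℕ, 0 < n → z ^ n • v = 0 → z • v = 0)) ∧
    ((∀ z : UniversalEnvelopingAlgebra ℂ L,
        (∀ u, u * z = z * u) → (∀ w : V, z • w = 0) → ∀ w : V, st z • w = 0) ∧
      (∀ z : UniversalEnvelopingAlgebra ℂ L, (∀ u, u * z = z * u) →
        ∀ n : ℕ, 0 < n → (∀ w : V, z ^ n • w = 0) → ∀ w : V, z • w = 0)) := by
  let _ : StarRing (UniversalEnvelopingAlgebra ℂ L) :=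
    { star := st, star_involutive := hst_invol, star_mul := hst_mul, star_add := hst_add }
  have _ : StarModule ℂ (UniversalEnvelopingAlgebra ℂ L) := ⟨hst_smul⟩
  let conj : L →ₗ⋆[ℂ] L := { toFun := conjL, map_add' := hconj_add, map_smul' := hconj_smul }
  let B' : V →ₗ[ℂ] V →ₗ⋆[ℂ] ℂ := LinearMap.mk₂'ₛₗ _ _ B hB_addl hB_smull
    (fun u v w => by rw [hB_herm, hB_addl, map_add, ← hB_herm, ← hB_herm])
    (fun a u w => by rw [hB_herm, hB_smull, map_mul, ← hB_herm, smul_eq_mul])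
  have hB : IsDefiniteAdjointForm (UniversalEnvelopingAlgebra ℂ L) B := by
    refine ⟨fun a => mem_adjointSubalgebra (B := B').1 ?_, fun v => map_zero (B' v),
      fun v hv => ?_⟩
    · exact adjointSubalgebra_eq_top conj hconj_invol hst_ι B' hB_inv ▸ Algebra.mem_top
    · by_contra hne
      simpa [hv] using (hB_posdef v hne).1
  have annihilator_stable {z : UniversalEnvelopingAlgebra ℂ L} (hz : ∀ u, u * z = z * u)
      (w : V) : (z • w = 0 → st z • w = 0) ∧ ∀ n, z ^ n • w = 0 → z • w = 0 :=
    have : IsStarNormal z := ⟨hz (star z)⟩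
    ⟨hB.star_smul_eq_zero_of_smul_eq_zero, hB.smul_eq_zero_of_pow_smul_eq_zero⟩
  exact ⟨fun v _ => ⟨fun z hz => (annihilator_stable hz v).1,
      fun z hz n _ => (annihilator_stable hz v).2 n⟩,
    fun z hz hV w => (annihilator_stable hz w).1 (hV w),
    fun z hz n _ hV w => (annihilator_stable hz w).2 n (hV w)⟩

/-- Proposition `UnitaryRadicalIdeal`.
Let `g` be a complex Lie algebra with a conjugation `conjL` (complex conjugation with
respect to a real form `g_ℝ`, whose elements are the fixed points of `conjL`), and let
`st` be the anti-linear anti-involution of `U(g)` extending `X ↦ -conjL X`.  Let `V` be a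
`U(g)`-module with a `g_ℝ`-invariant Hermitian inner product `B`.  Then for every
`0 ≠ v ∈ V` the annihilator of `v` in the center `Z(g)` of `U(g)` is a `*`-stable radical
ideal, and likewise for the annihilator of `V`. -/
theorem center_annihilator_star_stable_radical
    (L : Type*) [LieRing L] [LieAlgebra ℂ L]
    (conjL : L → L)
    (hconj_add : ∀ X Y : L, conjL (X + Y) = conjL X + conjL Y)
    (hconj_smul : ∀ (c : ℂ) (X : L), conjL (c • X) = (starRingEnd ℂ) c • conjL X)
    (hconj_bracket : ∀ X Y : L, conjL ⁅X, Y⁆ = ⁅conjL X, conjL Y⁆)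
    (hconj_invol : ∀ X : L, conjL (conjL X) = X)
    (st : UniversalEnvelopingAlgebra ℂ L → UniversalEnvelopingAlgebra ℂ L)
    (hst_add : ∀ a b, st (a + b) = st a + st b)
    (hst_mul : ∀ a b, st (a * b) = st b * st a)
    (hst_smul : ∀ (c : ℂ) a, st (c • a) = (starRingEnd ℂ) c • st a)
    (hst_invol : ∀ a, st (st a) = a)
    (hst_ι : ∀ X : L, st (ι ℂ X) = - ι ℂ (conjL X))
    (V : Type*) [AddCommGroup V] [Module ℂ V]
    [Module (UniversalEnvelopingAlgebra ℂ L) V]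
    [IsScalarTower ℂ (UniversalEnvelopingAlgebra ℂ L) V]
    (B : V → V → ℂ)
    (hB_addl : ∀ u v w, B (u + v) w = B u w + B v w)
    (hB_smull : ∀ (c : ℂ) v w, B (c • v) w = c * B v w)
    (hB_herm : ∀ v w, B v w = (starRingEnd ℂ) (B w v))
    (hB_posdef : ∀ v : V, v ≠ 0 → 0 < (B v v).re ∧ (B v v).im = 0)
    (hB_inv : ∀ X : L, conjL X = X → ∀ v w : V,
      B ((ι ℂ X : UniversalEnvelopingAlgebra ℂ L) • v) w
        + B v ((ι ℂ X : UniversalEnvelopingAlgebra ℂ L) • w) = 0) :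
    (∀ v : V, v ≠ 0 →
      (∀ z : UniversalEnvelopingAlgebra ℂ L,
        (∀ u, u * z = z * u) → z • v = 0 → st z • v = 0) ∧
      (∀ z : UniversalEnvelopingAlgebra ℂ L, (∀ u, u * z = z * u) →
        ∀ n : ℕ, 0 < n → z ^ n • v = 0 → z • v = 0)) ∧
    ((∀ z : UniversalEnvelopingAlgebra ℂ L,
        (∀ u, u * z = z * u) → (∀ w : V, z • w = 0) → ∀ w : V, st z • w = 0) ∧
      (∀ z : UniversalEnvelopingAlgebra ℂ L, (∀ u, u * z = z * u) →
        ∀ n : ℕ, 0 < n → (∀ w : V, z ^ n • w = 0) → ∀ w : V, z • w = 0)) :=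
  center_annihilator_star_stable_radical_general L conjL hconj_add hconj_smul hconj_invol st hst_add
    hst_mul hst_smul hst_invol hst_ι V B hB_addl hB_smull hB_herm hB_posdef hB_inv
end
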